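/- Let W be a |T|×|A| real matrix with W Wᵀ = I and M a |A|×|A| real matrix. Among all upper-triangular |T|×|T| matrices Λ, the value ‖M − Wᵀ Λ W‖²_F is minimized by taking Λ = Up(W M Wᵀ), the upper-triangular part of W M Wᵀ (i.e., Λ_{i,j} = (W M Wᵀ)_{i,j} for i ≤ j and Λ_{i,j} = 0 for i > j). -/

import Mathlib

/-! Expanding `‖M - Wᵀ Λ W‖²_F` in the Frobenius inner product `⟪X, Y⟫ = tr (X Yᵀ)` gives
`‖M‖² - 2 ⟪W M Wᵀ, Λ⟫ + ‖Λ‖²`, since `Λ ↦ Wᵀ Λ W` is an isometry when `W Wᵀ = 1`. For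
upper-triangular `Λ` only the upper-triangular entries of `W M Wᵀ` enter `⟪W M Wᵀ, Λ⟫`, so with
`U = Up (W M Wᵀ)` this equals `‖M‖² - ‖U‖² + ‖Λ - U‖²`, which is least at `Λ = U`. -/

open Matrix

def Up {T : Type*} [LinearOrder T] (X : Matrix T T ℝ) : Matrix T T ℝ :=
  fun i j => if i ≤ j then X i j else 0

section Frobenius

variable {m n : Type*} [Fintype m] [Fintype n]

theorem trace_mul_transpose_eq_sum (X Y : Matrix m n ℝ) :
    trace (X * Yᵀ) = ∑ i, ∑ j, X i j * Y i j := by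
  simp [trace, mul_apply]

theorem trace_mul_transpose_comm (X Y : Matrix m n ℝ) : trace (X * Yᵀ) = trace (Y * Xᵀ) := by
  simp only [trace_mul_transpose_eq_sum, mul_comm]

theorem trace_mul_transpose_self_nonneg (X : Matrix m n ℝ) : 0 ≤ trace (X * Xᵀ) := by
  rw [trace_mul_transpose_eq_sum]
  exact Finset.sum_nonneg fun i _ => Finset.sum_nonneg fun j _ => mul_self_nonneg (X i j)

theorem trace_sub_mul_transpose_sub (X Y : Matrix m n ℝ) :
    trace ((X - Y) * (X - Y)ᵀ) = trace (X * Xᵀ) - 2 * trace (X * Yᵀ) + trace (Y * Yᵀ) := by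
  rw [transpose_sub, Matrix.sub_mul, Matrix.mul_sub, Matrix.mul_sub, trace_sub, trace_sub,
    trace_sub, trace_mul_transpose_comm Y X]
  ring

end Frobenius

section Isometry

variable {m n : Type*} [Fintype m] [Fintype n]

theorem trace_mul_transpose_conj (W : Matrix m n ℝ) (X : Matrix n n ℝ) (L : Matrix m m ℝ) :
    trace (X * (Wᵀ * L * W)ᵀ) = trace (W * X * Wᵀ * Lᵀ) := by
  rw [transpose_mul, transpose_mul, transpose_transpose, ← Matrix.mul_assoc, ← Matrix.mul_assoc,
    trace_mul_comm, ← Matrix.mul_assoc, ← Matrix.mul_assoc]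

variable [DecidableEq m] {W : Matrix m n ℝ}

theorem trace_conj_mul_transpose_self (hW : W * Wᵀ = 1) (L : Matrix m m ℝ) :
    trace ((Wᵀ * L * W) * (Wᵀ * L * W)ᵀ) = trace (L * Lᵀ) := by
  have hWL : W * (Wᵀ * L * W) * Wᵀ = L := by
    rw [show W * (Wᵀ * L * W) * Wᵀ = W * Wᵀ * L * (W * Wᵀ) by simp only [Matrix.mul_assoc], hW,
      Matrix.one_mul, Matrix.mul_one]
  rw [trace_mul_transpose_conj, hWL]

theorem trace_sub_conj_mul_transpose_sub (hW : W * Wᵀ = 1) (M : Matrix n n ℝ)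
    (L : Matrix m m ℝ) :
    trace ((M - Wᵀ * L * W) * (M - Wᵀ * L * W)ᵀ) =
      trace (M * Mᵀ) - 2 * trace (W * M * Wᵀ * Lᵀ) + trace (L * Lᵀ) := by
  rw [trace_sub_mul_transpose_sub, trace_mul_transpose_conj, trace_conj_mul_transpose_self hW]

end Isometry

section UpperTriangular

variable {m : Type*} [LinearOrder m]

theorem blockTriangular_Up (X : Matrix m m ℝ) : BlockTriangular (Up X) id :=
  fun _ _ hji => if_neg (not_le.mpr hji)

variable [Fintype m]

theorem trace_Up_mul_transpose (X : Matrix m m ℝ) {L : Matrix m m ℝ}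
    (hL : BlockTriangular L id) : trace (Up X * Lᵀ) = trace (X * Lᵀ) := by
  simp only [trace_mul_transpose_eq_sum]
  refine Finset.sum_congr rfl fun i _ => Finset.sum_congr rfl fun j _ => ?_
  rcases le_or_gt i j with hij | hji
  · simp only [Up, if_pos hij]
  · simp only [hL hji, mul_zero]

theorem trace_self_sub_two_mul_trace_eq_of_blockTriangular (N : Matrix m m ℝ) {L : Matrix m m ℝ}
    (hL : BlockTriangular L id) :
    trace (L * Lᵀ) - 2 * trace (N * Lᵀ) =
      trace ((L - Up N) * (L - Up N)ᵀ) - trace (Up N * (Up N)ᵀ) := by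
  rw [trace_sub_mul_transpose_sub, trace_mul_transpose_comm L (Up N), trace_Up_mul_transpose N hL]
  ring

end UpperTriangular

theorem trace_sub_conj_mul_transpose_sub_eq_of_blockTriangular {T A : Type*} [Fintype T]
    [LinearOrder T] [Fintype A] {W : Matrix T A ℝ} (hW : W * Wᵀ = 1) (M : Matrix A A ℝ)
    {L : Matrix T T ℝ} (hL : BlockTriangular L id) :
    trace ((M - Wᵀ * L * W) * (M - Wᵀ * L * W)ᵀ) =
      trace (M * Mᵀ) - trace (Up (W * M * Wᵀ) * (Up (W * M * Wᵀ))ᵀ) +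
        trace ((L - Up (W * M * Wᵀ)) * (L - Up (W * M * Wᵀ))ᵀ) := by
  rw [trace_sub_conj_mul_transpose_sub hW]
  linarith [trace_self_sub_two_mul_trace_eq_of_blockTriangular (W * M * Wᵀ) hL]

theorem stmt7 {T A : Type*} [Fintype T] [LinearOrder T] [Fintype A]
    (W : Matrix T A ℝ) (hW : W * Wᵀ = 1) (M : Matrix A A ℝ) :
    ∀ Λ : Matrix T T ℝ, (∀ i j, j < i → Λ i j = 0) →
      Matrix.trace ((M - Wᵀ * Up (W * M * Wᵀ) * W) * (M - Wᵀ * Up (W * M * Wᵀ) * W)ᵀ) ≤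
        Matrix.trace ((M - Wᵀ * Λ * W) * (M - Wᵀ * Λ * W)ᵀ) := by
  intro Λ hΛ
  rw [trace_sub_conj_mul_transpose_sub_eq_of_blockTriangular hW M (blockTriangular_Up _),
    trace_sub_conj_mul_transpose_sub_eq_of_blockTriangular hW M (L := Λ) fun i j => hΛ i j,
    sub_self, Matrix.zero_mul, trace_zero, add_zero]
  exact le_add_of_nonneg_right (trace_mul_transpose_self_nonneg _)
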